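/- Let G=(V,E) be a finite simple graph on n vertices with E nonempty, f(x) = -∑_v x_v + (γ/2) xᵀ A_G x - (1/2) xᵀ A_{G'} x with γ ≥ n+1. Then the set of local minimizers of f over [0,1]^n is exactly the set of indicator vectors of maximal independent sets of G. -/

import Mathlib

/-!
With `A`, `A'` the adjacency matrices of `G` and `Gᶜ`, the partial derivatives of `f` are
`g_v(x) = γ (A x)_v - (A' x)_v - 1`. On the box, if some neighbour `w` of `v` has `x_w = 1` then
`g_v ≥ γ - (n - 1) - 1 ≥ 1`, and if all neighbours of `v` vanish then `g_v ≤ -1`.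

At the indicator of a maximal independent set these bounds make the gradient point into the box
with margin `1` at every coordinate, and this linear growth dominates the quadratic remainder near
the vertex. Conversely, at a local minimizer `g_v = 0` at every fractional coordinate `v`; as `f`
has no diagonal terms, a suitable move of two fractional coordinates is strictly concave, so at most
one coordinate is fractional, and the two bounds rule that one out too. The same bounds show that
the support of a binary local minimizer is independent and maximal.
-/

open scoped Classical
open Finset Matrix

/-- The dataless quadratic network objective
`f(x) = -∑_v x_v + (γ/2) xᵀ A_G x - (1/2) xᵀ A_{Gᶜ} x`. -/
noncomputable def quantNetObj {n : ℕ} (G : SimpleGraph (Fin n)) (γ : ℝ) (x : Fin n → ℝ) : ℝ :=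
  -(∑ v, x v) + γ / 2 * (x ⬝ᵥ ((G.adjMatrix ℝ) *ᵥ x)) - 1 / 2 * (x ⬝ᵥ ((Gᶜ.adjMatrix ℝ) *ᵥ x))

open Filter Topology

section Matrix

variable {ι : Type*} [Fintype ι]

theorem Matrix.IsSymm.add_dotProduct_mulVec_add {M : Matrix ι ι ℝ} (hM : M.IsSymm) (x h : ι → ℝ) :
    (x + h) ⬝ᵥ (M *ᵥ (x + h)) = x ⬝ᵥ (M *ᵥ x) + 2 * (h ⬝ᵥ (M *ᵥ x)) + h ⬝ᵥ (M *ᵥ h) := by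
  have hxh : x ⬝ᵥ (M *ᵥ h) = h ⬝ᵥ (M *ᵥ x) := by
    rw [dotProduct_mulVec, ← mulVec_transpose, hM.eq, dotProduct_comm]
  simp only [mulVec_add, dotProduct_add, add_dotProduct, hxh]
  ring

theorem Matrix.IsSymm.single_add_single_dotProduct_mulVec [DecidableEq ι] {M : Matrix ι ι ℝ}
    (hM : M.IsSymm) (u v : ι) (a b : ℝ) :
    (Pi.single u a + Pi.single v b) ⬝ᵥ (M *ᵥ (Pi.single u a + Pi.single v b))
      = a ^ 2 * M u u + 2 * (a * b * M u v) + b ^ 2 * M v v := by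
  have hvu : M v u = M u v := hM.apply u v
  simp only [mulVec_add, mulVec_single, dotProduct_add, add_dotProduct, single_dotProduct,
    Pi.smul_apply, col_apply, op_smul_eq_mul, hvu]
  ring

theorem abs_dotProduct_mulVec_self_le {M : Matrix ι ι ℝ} (hM : ∀ i j, |M i j| ≤ 1) (h : ι → ℝ) :
    |h ⬝ᵥ (M *ᵥ h)| ≤ (∑ i, |h i|) ^ 2 := by
  calc |h ⬝ᵥ (M *ᵥ h)| = |∑ i, ∑ j, h i * (M i j * h j)| := by
        simp only [dotProduct, mulVec, Finset.mul_sum]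
    _ ≤ ∑ i, ∑ j, |h i| * |h j| := by
        refine (abs_sum_le_sum_abs _ _).trans (sum_le_sum fun i _ => ?_)
        refine (abs_sum_le_sum_abs _ _).trans (sum_le_sum fun j _ => ?_)
        rw [abs_mul, abs_mul]
        exact mul_le_mul_of_nonneg_left
          (mul_le_of_le_one_left (abs_nonneg _) (hM i j)) (abs_nonneg _)
    _ = (∑ i, |h i|) ^ 2 := by rw [sq, sum_mul_sum]

end Matrix

theorem SimpleGraph.abs_adjMatrix_apply_le_one {V : Type*} (G : SimpleGraph V) [DecidableRel G.Adj]
    (i j : V) : |G.adjMatrix ℝ i j| ≤ 1 := by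
  rw [adjMatrix_apply]; split_ifs <;> norm_num

theorem IsLocalMinOn.exists_pos_le_add_smul {E β : Type*} [AddCommGroup E] [Module ℝ E]
    [TopologicalSpace E] [ContinuousAdd E] [ContinuousSMul ℝ E] [Preorder β] {f : E → β}
    {s : Set E} {x d : E} (hf : IsLocalMinOn f s x) (hd : ∀ᶠ t in 𝓝[>] (0 : ℝ), x + t • d ∈ s) :
    ∃ t > (0 : ℝ), f x ≤ f (x + t • d) := by
  have hline : Tendsto (fun t : ℝ => x + t • d) (𝓝[>] 0) (𝓝[s] x) := by
    refine tendsto_nhdsWithin_iff.2 ⟨?_, hd⟩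
    have hcont : Continuous fun t : ℝ => x + t • d := by fun_prop
    simpa using (hcont.tendsto 0).mono_left nhdsWithin_le_nhds
  have hmin := IsMinFilter.comp_tendsto (f := f) (b := 0)
    (by simp only [zero_smul, add_zero]; exact hf) hline
  obtain ⟨t, hle, ht⟩ := (hmin.and self_mem_nhdsWithin).exists
  exact ⟨t, ht, by simpa using hle⟩

theorem eventually_add_mul_mem_Icc {a b p q : ℝ} (ha : a ∈ Set.Icc p q) (hpos : 0 < b → a < q)
    (hneg : b < 0 → p < a) : ∀ᶠ t in 𝓝[>] (0 : ℝ), a + t * b ∈ Set.Icc p q := by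
  have hlim : Tendsto (fun t => a + t * b) (𝓝[>] 0) (𝓝 a) := by
    have hcont : Continuous fun t : ℝ => a + t * b := by fun_prop
    simpa using (hcont.tendsto 0).mono_left nhdsWithin_le_nhds
  rcases lt_trichotomy b 0 with hb | rfl | hb
  · filter_upwards [self_mem_nhdsWithin, hlim.eventually_const_lt (hneg hb)] with t ht hp
    exact ⟨hp.le, by nlinarith [ha.2, ht.out]⟩
  · simpa using ha
  · filter_upwards [self_mem_nhdsWithin, hlim.eventually_lt_const (hpos hb)] with t ht hq
    exact ⟨by nlinarith [ha.1, ht.out], hq.le⟩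

theorem eventually_add_smul_mem_Icc {ι : Type*} [Finite ι] {x d p q : ι → ℝ}
    (hx : x ∈ Set.Icc p q) (hpos : ∀ i, 0 < d i → x i < q i) (hneg : ∀ i, d i < 0 → p i < x i) :
    ∀ᶠ t in 𝓝[>] (0 : ℝ), x + t • d ∈ Set.Icc p q := by
  have hcoord := eventually_all.2 fun i =>
    eventually_add_mul_mem_Icc ⟨hx.1 i, hx.2 i⟩ (hpos i) (hneg i)
  filter_upwards [hcoord] with t ht
  exact ⟨fun i => (ht i).1, fun i => (ht i).2⟩

theorem eventually_add_smul_single_mem_Icc {ι : Type*} [Finite ι] [DecidableEq ι]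
    {x p q : ι → ℝ} {v : ι} {a : ℝ} (hx : x ∈ Set.Icc p q) (hpos : 0 < a → x v < q v)
    (hneg : a < 0 → p v < x v) :
    ∀ᶠ t in 𝓝[>] (0 : ℝ), x + t • Pi.single v a ∈ Set.Icc p q := by
  refine eventually_add_smul_mem_Icc hx (fun i hi => ?_) (fun i hi => ?_) <;>
    rcases eq_or_ne i v with rfl | hiv
  · exact hpos (by simpa using hi)
  · simp [hiv] at hi
  · exact hneg (by simpa using hi)
  · simp [hiv] at hi

noncomputable def quantNetGrad {n : ℕ} (G : SimpleGraph (Fin n)) (γ : ℝ) (x : Fin n → ℝ) :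
    Fin n → ℝ :=
  γ • (G.adjMatrix ℝ *ᵥ x) - Gᶜ.adjMatrix ℝ *ᵥ x - 1

section Objective

variable {n : ℕ} (G : SimpleGraph (Fin n)) (γ : ℝ)

theorem quantNetGrad_apply (x : Fin n → ℝ) (v : Fin n) :
    quantNetGrad G γ x v =
      γ * ∑ u ∈ G.neighborFinset v, x u - ∑ u ∈ Gᶜ.neighborFinset v, x u - 1 := by
  simp only [quantNetGrad, Pi.sub_apply, Pi.smul_apply, smul_eq_mul, Pi.one_apply,
    SimpleGraph.adjMatrix_mulVec_apply]

theorem quantNetObj_add (x h : Fin n → ℝ) :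
    quantNetObj G γ (x + h) = quantNetObj G γ x + h ⬝ᵥ quantNetGrad G γ x
      + γ / 2 * (h ⬝ᵥ (G.adjMatrix ℝ *ᵥ h)) - 1 / 2 * (h ⬝ᵥ (Gᶜ.adjMatrix ℝ *ᵥ h)) := by
  simp only [quantNetObj, quantNetGrad, G.isSymm_adjMatrix.add_dotProduct_mulVec_add,
    Gᶜ.isSymm_adjMatrix.add_dotProduct_mulVec_add, dotProduct_sub, dotProduct_smul, dotProduct_one,
    smul_eq_mul, Pi.add_apply, sum_add_distrib]
  ring

theorem quantNetObj_add_single_add_single (x : Fin n → ℝ) (u v : Fin n) (a b : ℝ) :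
    quantNetObj G γ (x + (Pi.single u a + Pi.single v b)) = quantNetObj G γ x
      + a * quantNetGrad G γ x u + b * quantNetGrad G γ x v
      + a * b * (γ * G.adjMatrix ℝ u v - Gᶜ.adjMatrix ℝ u v) := by
  simp only [quantNetObj_add, G.isSymm_adjMatrix.single_add_single_dotProduct_mulVec,
    Gᶜ.isSymm_adjMatrix.single_add_single_dotProduct_mulVec, add_dotProduct, single_dotProduct,
    SimpleGraph.adjMatrix_apply, SimpleGraph.irrefl, if_false]
  ring

theorem quantNetObj_add_single (x : Fin n → ℝ) (v : Fin n) (a : ℝ) :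
    quantNetObj G γ (x + Pi.single v a) = quantNetObj G γ x + a * quantNetGrad G γ x v := by
  simpa using quantNetObj_add_single_add_single G γ x v v 0 a

theorem quantNetObj_add_ge (hγ : 0 ≤ γ) (x h : Fin n → ℝ) :
    quantNetObj G γ x + h ⬝ᵥ quantNetGrad G γ x - (γ + 1) / 2 * (∑ v, |h v|) ^ 2
      ≤ quantNetObj G γ (x + h) := by
  have hA := abs_le.1 (abs_dotProduct_mulVec_self_le G.abs_adjMatrix_apply_le_one h)
  have hB := abs_le.1 (abs_dotProduct_mulVec_self_le Gᶜ.abs_adjMatrix_apply_le_one h)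
  rw [quantNetObj_add]
  nlinarith [hA.1, hB.2]

end Objective

section GradientBounds

variable {n : ℕ} {G : SimpleGraph (Fin n)} {γ : ℝ} {x : Fin n → ℝ} {v w : Fin n}

theorem one_le_quantNetGrad (hγ : (n : ℝ) + 1 ≤ γ) (hx : x ∈ Set.Icc 0 1) (hvw : G.Adj v w)
    (hw : x w = 1) : 1 ≤ quantNetGrad G γ x v := by
  have hnbr : 1 ≤ ∑ u ∈ G.neighborFinset v, x u :=
    hw ▸ single_le_sum (fun u _ => hx.1 u) ((G.mem_neighborFinset v w).2 hvw)
  have hdeg : (Gᶜ.degree v : ℝ) + 1 ≤ n := by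
    exact_mod_cast (Gᶜ.degree_lt_card_verts v).trans_eq (Fintype.card_fin n)
  have hcompl : ∑ u ∈ Gᶜ.neighborFinset v, x u ≤ Gᶜ.degree v := by
    rw [← Gᶜ.card_neighborFinset_eq_degree, ← nsmul_one, ← sum_const]
    exact sum_le_sum fun u _ => hx.2 u
  rw [quantNetGrad_apply]
  nlinarith

theorem quantNetGrad_le_neg_one (hx : 0 ≤ x) (hv : ∀ w, G.Adj v w → x w = 0) :
    quantNetGrad G γ x v ≤ -1 := by
  have hnbr : ∑ u ∈ G.neighborFinset v, x u = 0 :=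
    sum_eq_zero fun u hu => hv u ((G.mem_neighborFinset v u).1 hu)
  rw [quantNetGrad_apply, hnbr, mul_zero]
  linarith [sum_nonneg fun u (_ : u ∈ Gᶜ.neighborFinset v) => hx u]

end GradientBounds

section LocalMinimizer

variable {n : ℕ} {G : SimpleGraph (Fin n)} {γ : ℝ} {x : Fin n → ℝ}

theorem quantNetGrad_nonneg_of_lt_one (hmin : IsLocalMinOn (quantNetObj G γ) (Set.Icc 0 1) x)
    (hx : x ∈ Set.Icc 0 1) {v : Fin n} (hv : x v < 1) : 0 ≤ quantNetGrad G γ x v := by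
  obtain ⟨t, ht, hle⟩ := hmin.exists_pos_le_add_smul (d := Pi.single v 1) <|
    eventually_add_smul_single_mem_Icc hx (fun _ => hv) (fun h => absurd h one_pos.not_gt)
  rw [← Pi.single_smul, smul_eq_mul, mul_one, quantNetObj_add_single] at hle
  exact nonneg_of_mul_nonneg_right (by linarith) ht

theorem quantNetGrad_nonpos_of_pos (hmin : IsLocalMinOn (quantNetObj G γ) (Set.Icc 0 1) x)
    (hx : x ∈ Set.Icc 0 1) {v : Fin n} (hv : 0 < x v) : quantNetGrad G γ x v ≤ 0 := by
  obtain ⟨t, ht, hle⟩ := hmin.exists_pos_le_add_smul (d := Pi.single v (-1)) <|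
    eventually_add_smul_single_mem_Icc hx (fun h => absurd h (by norm_num)) (fun _ => hv)
  rw [← Pi.single_smul, smul_eq_mul, mul_neg_one, quantNetObj_add_single] at hle
  exact nonpos_of_mul_nonpos_right (by linarith) ht

theorem quantNetGrad_eq_zero_of_mem_Ioo (hmin : IsLocalMinOn (quantNetObj G γ) (Set.Icc 0 1) x)
    (hx : x ∈ Set.Icc 0 1) {v : Fin n} (hv : x v ∈ Set.Ioo 0 1) : quantNetGrad G γ x v = 0 :=
  le_antisymm (quantNetGrad_nonpos_of_pos hmin hx hv.1) (quantNetGrad_nonneg_of_lt_one hmin hx hv.2)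

/-- Two fractional coordinates `u ≠ v` have vanishing partial derivatives, so along
`(-c, 1)` on `(x_u, x_v)`, with `c = γ A_uv - A'_uv ∈ {γ, -1}`, `f` drops by `t²c²`. -/
theorem false_of_two_fractional_coords (hγ : 0 < γ)
    (hmin : IsLocalMinOn (quantNetObj G γ) (Set.Icc 0 1) x) (hx : x ∈ Set.Icc 0 1) {u v : Fin n}
    (huv : u ≠ v) (hu : x u ∈ Set.Ioo 0 1) (hv : x v ∈ Set.Ioo 0 1) : False := by
  set c := γ * G.adjMatrix ℝ u v - Gᶜ.adjMatrix ℝ u v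
  have hc : c ≠ 0 := by
    by_cases hadj : G.Adj u v
    · simp [c, hadj, hγ.ne']
    · simp [c, hadj, huv]
  have hfract : ∀ i, (Pi.single u (-c) + Pi.single v 1 : Fin n → ℝ) i ≠ 0 → x i ∈ Set.Ioo 0 1 := by
    intro i hi
    rcases eq_or_ne i u with rfl | hiu
    · exact hu
    rcases eq_or_ne i v with rfl | hiv
    · exact hv
    simp [hiu, hiv] at hi
  obtain ⟨t, ht, hle⟩ := hmin.exists_pos_le_add_smul (d := Pi.single u (-c) + Pi.single v 1) <|
    eventually_add_smul_mem_Icc hx (fun i hi => (hfract i hi.ne').2)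
      (fun i hi => (hfract i hi.ne).1)
  rw [smul_add, ← Pi.single_smul, ← Pi.single_smul, smul_eq_mul, smul_eq_mul,
    quantNetObj_add_single_add_single,
    quantNetGrad_eq_zero_of_mem_Ioo hmin hx hu, quantNetGrad_eq_zero_of_mem_Ioo hmin hx hv]
    at hle
  have hdrop : 0 < (t * c) ^ 2 := by positivity
  nlinarith

theorem eq_zero_or_eq_one_of_isLocalMinOn (hγ : (n : ℝ) + 1 ≤ γ)
    (hmin : IsLocalMinOn (quantNetObj G γ) (Set.Icc 0 1) x) (hx : x ∈ Set.Icc 0 1) (v : Fin n) :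
    x v = 0 ∨ x v = 1 := by
  have hγpos : 0 < γ := by linarith [n.cast_nonneg (α := ℝ)]
  have hfract : ∀ w, ¬(x w = 0 ∨ x w = 1) → x w ∈ Set.Ioo 0 1 := fun w hw =>
    ⟨(hx.1 w).lt_of_ne' (not_or.1 hw).1, (hx.2 w).lt_of_ne (not_or.1 hw).2⟩
  by_contra hv
  have hvf := hfract v hv
  have hgrad := quantNetGrad_eq_zero_of_mem_Ioo hmin hx hvf
  have hbin : ∀ w, w ≠ v → x w = 0 ∨ x w = 1 := fun w hwv =>
    by_contra fun hw => false_of_two_fractional_coords hγpos hmin hx hwv (hfract w hw) hvf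
  by_cases hnbr : ∃ w, G.Adj v w ∧ x w = 1
  · obtain ⟨w, hvw, hw⟩ := hnbr
    linarith [one_le_quantNetGrad hγ hx hvw hw]
  · push Not at hnbr
    linarith [quantNetGrad_le_neg_one (G := G) (γ := γ) hx.1 fun w hvw =>
      (hbin w (G.ne_of_adj hvw).symm).resolve_right (hnbr w hvw)]

theorem exists_maximal_indep_of_isLocalMinOn (hγ : (n : ℝ) + 1 ≤ γ)
    (hmin : IsLocalMinOn (quantNetObj G γ) (Set.Icc 0 1) x) (hx : x ∈ Set.Icc 0 1) :
    ∃ S : Finset (Fin n), (∀ u ∈ S, ∀ v ∈ S, ¬ G.Adj u v) ∧ (∀ v, v ∉ S → ∃ w ∈ S, G.Adj v w) ∧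
      x = fun v => if v ∈ S then (1 : ℝ) else 0 := by
  have hbin := eq_zero_or_eq_one_of_isLocalMinOn hγ hmin hx
  refine ⟨univ.filter (x · = 1), ?_, ?_, ?_⟩
  · intro u hu w hw huw
    rw [mem_filter] at hu hw
    linarith [one_le_quantNetGrad hγ hx huw hw.2,
      quantNetGrad_nonpos_of_pos hmin hx (hu.2 ▸ one_pos : 0 < x u)]
  · intro v hv
    by_contra hnbr
    push Not at hnbr
    have hv0 : x v = 0 := (hbin v).resolve_right fun h => hv (mem_filter.2 ⟨mem_univ v, h⟩)
    linarith [quantNetGrad_nonneg_of_lt_one hmin hx (hv0 ▸ one_pos : x v < 1),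
      quantNetGrad_le_neg_one (G := G) (γ := γ) hx.1 fun w hvw => (hbin w).resolve_right
        fun h => hnbr w (mem_filter.2 ⟨mem_univ w, h⟩) hvw]
  · funext v
    by_cases hv : x v = 1 <;> simp [hv, (hbin v).resolve_right]

end LocalMinimizer

theorem indicator_mem_Icc_zero_one {ι : Type*} [DecidableEq ι] (S : Finset ι) :
    (fun v => if v ∈ S then (1 : ℝ) else 0) ∈ Set.Icc 0 1 :=
  ⟨fun v => by by_cases hv : v ∈ S <;> simp [hv], fun v => by by_cases hv : v ∈ S <;> simp [hv]⟩

section MaximalIndependentSet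

variable {n : ℕ} {G : SimpleGraph (Fin n)} {γ : ℝ}

/-- At a vertex of the box whose gradient points inward with margin `1`, the linear term of `f`
grows like `‖y - z‖₁`, which beats the quadratic remainder `(γ + 1)/2 ‖y - z‖₁²`
as soon as `‖y - z‖₁ < 2/(γ + 1)`. -/
theorem isLocalMinOn_quantNetObj_of_vertex (hγ : 0 ≤ γ) {z : Fin n → ℝ}
    (hz : ∀ v, z v = 1 ∧ quantNetGrad G γ z v ≤ -1 ∨ z v = 0 ∧ 1 ≤ quantNetGrad G γ z v) :
    IsLocalMinOn (quantNetObj G γ) (Set.Icc 0 1) z := by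
  have hr : 0 < 2 / (γ + 1) := by positivity
  have hlim : Tendsto (fun y : Fin n → ℝ => ∑ v, |(y - z) v|) (𝓝 z) (𝓝 0) := by
    have hcont : Continuous fun y : Fin n → ℝ => ∑ v, |(y - z) v| := by fun_prop
    simpa using hcont.tendsto z
  filter_upwards [self_mem_nhdsWithin, nhdsWithin_le_nhds (hlim.eventually_lt_const hr)]
    with y hy hsmall
  have hlin : ∑ v, |(y - z) v| ≤ (y - z) ⬝ᵥ quantNetGrad G γ z := sum_le_sum fun v _ => by
    have hy0 : 0 ≤ y v := hy.1 v
    have hy1 : y v ≤ 1 := hy.2 v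
    rcases hz v with ⟨hzv, hg⟩ | ⟨hzv, hg⟩
    · rw [Pi.sub_apply, hzv, abs_of_nonpos (by linarith)]
      nlinarith
    · rw [Pi.sub_apply, hzv, sub_zero, abs_of_nonneg hy0]
      nlinarith
  have hquad := quantNetObj_add_ge G γ hγ z (y - z)
  rw [add_sub_cancel] at hquad
  have hs : (γ + 1) * ∑ v, |(y - z) v| < 2 := by
    rwa [lt_div_iff₀ (by linarith), mul_comm] at hsmall
  nlinarith [sum_nonneg fun v (_ : v ∈ univ) => abs_nonneg ((y - z) v)]

theorem isLocalMinOn_quantNetObj_indicator (hγ : (n : ℝ) + 1 ≤ γ) {S : Finset (Fin n)}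
    (hind : ∀ u ∈ S, ∀ v ∈ S, ¬ G.Adj u v) (hmax : ∀ v, v ∉ S → ∃ w ∈ S, G.Adj v w) :
    IsLocalMinOn (quantNetObj G γ) (Set.Icc 0 1) fun v => if v ∈ S then (1 : ℝ) else 0 := by
  have hz := indicator_mem_Icc_zero_one S
  refine isLocalMinOn_quantNetObj_of_vertex (by linarith [n.cast_nonneg (α := ℝ)]) fun v => ?_
  by_cases hv : v ∈ S
  · refine Or.inl ⟨if_pos hv, quantNetGrad_le_neg_one hz.1 fun w hvw => ?_⟩
    exact if_neg fun hw => hind v hv w hw hvw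
  · obtain ⟨w, hw, hvw⟩ := hmax v hv
    exact Or.inr ⟨if_neg hv, one_le_quantNetGrad hγ hz hvw (if_pos hw)⟩

end MaximalIndependentSet

theorem stmt14_general {n : ℕ} (G : SimpleGraph (Fin n))
    (γ : ℝ) (hγ : (n : ℝ) + 1 ≤ γ) :
    {x : Fin n → ℝ | x ∈ Set.Icc (0 : Fin n → ℝ) 1 ∧
        IsLocalMinOn (quantNetObj G γ) (Set.Icc (0 : Fin n → ℝ) 1) x}
      = {x : Fin n → ℝ | ∃ S : Finset (Fin n),
          (∀ u ∈ S, ∀ v ∈ S, ¬ G.Adj u v) ∧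
          (∀ v, v ∉ S → ∃ w ∈ S, G.Adj v w) ∧
          x = fun v => if v ∈ S then (1 : ℝ) else 0} := by
  ext x
  constructor
  · rintro ⟨hx, hmin⟩
    exact exists_maximal_indep_of_isLocalMinOn hγ hmin hx
  · rintro ⟨S, hind, hmax, rfl⟩
    exact ⟨indicator_mem_Icc_zero_one S, isLocalMinOn_quantNetObj_indicator hγ hind hmax⟩

/-- for γ ≥ n+1 (and G with at least one edge), the local minimizers of f
over [0,1]^n are exactly the indicator vectors of maximal independent sets of G. -/
theorem stmt14 {n : ℕ} (G : SimpleGraph (Fin n)) (hE : G.edgeSet.Nonempty)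
    (γ : ℝ) (hγ : (n : ℝ) + 1 ≤ γ) :
    {x : Fin n → ℝ | x ∈ Set.Icc (0 : Fin n → ℝ) 1 ∧
        IsLocalMinOn (quantNetObj G γ) (Set.Icc (0 : Fin n → ℝ) 1) x}
      = {x : Fin n → ℝ | ∃ S : Finset (Fin n),
          (∀ u ∈ S, ∀ v ∈ S, ¬ G.Adj u v) ∧
          (∀ v, v ∉ S → ∃ w ∈ S, G.Adj v w) ∧
          x = fun v => if v ∈ S then (1 : ℝ) else 0} :=
  stmt14_general G γ hγ
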